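/- CGU state sets with commuting GU generators: let G = {U_1,...,U_l} and Q = {V_1,...,V_r} be finite groups of n×n unitary matrices such that for all i, k there is a real phase θ(i,k) with U_iV_k = e^{jθ(i,k)}V_kU_i, let φ be an n×c matrix, and set W = Σ_{i=1}^l Σ_{k=1}^r U_iV_kφφ*V_k*U_i*. Then W commutes with U_pV_t for all p, t; consequently, if W is positive definite, the LSM factors satisfy μ_{ik} := W^{-1/2}U_iV_kφ = U_iV_kμ̄ where μ̄ = W^{-1/2}φ, so the LSM factors are generated from the single generator μ̄. -/

import Mathlib

open Matrix
open scoped ComplexOrder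

set_option maxHeartbeats 1000000

/-- The positive semidefinite square root of a positive semidefinite matrix, as defined in
Mathlib of December 2024 (removed from current Mathlib). -/
noncomputable def Matrix.PosSemidef.sqrt {n : Type*} [Fintype n] [DecidableEq n] {𝕜 : Type*}
    [RCLike 𝕜] {A : Matrix n n 𝕜} (hA : A.PosSemidef) : Matrix n n 𝕜 :=
  (hA.1.eigenvectorUnitary : Matrix n n 𝕜) *
    diagonal (fun i => ((Real.sqrt (hA.1.eigenvalues i) : ℝ) : 𝕜)) *
    (star hA.1.eigenvectorUnitary : Matrix n n 𝕜)

namespace Matrix.PosSemidef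

open scoped MatrixOrder

theorem sqrt_eq_cfc_real {n : Type*} [Fintype n] [DecidableEq n] {𝕜 : Type*}
    [RCLike 𝕜] {A : Matrix n n 𝕜} (hA : A.PosSemidef) : hA.sqrt = CFC.sqrt A := by
  rw [CFC.sqrt_eq_real_sqrt A hA.nonneg, cfcₙ_eq_cfc, hA.1.cfc_eq]
  simp [Matrix.IsHermitian.cfc, Matrix.PosSemidef.sqrt, Function.comp_def]

theorem posSemidef_sqrt {n : Type*} [Fintype n] [DecidableEq n] {𝕜 : Type*}
    [RCLike 𝕜] {A : Matrix n n 𝕜} (hA : A.PosSemidef) : hA.sqrt.PosSemidef := by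
  rw [sqrt_eq_cfc_real]
  exact (CFC.sqrt_nonneg A).posSemidef

theorem sqrt_mul_self {n : Type*} [Fintype n] [DecidableEq n] {𝕜 : Type*}
    [RCLike 𝕜] {A : Matrix n n 𝕜} (hA : A.PosSemidef) : hA.sqrt * hA.sqrt = A := by
  rw [sqrt_eq_cfc_real]
  exact CFC.sqrt_mul_sqrt_self A hA.nonneg

theorem eq_sqrt_of_sq_eq {n : Type*} [Fintype n] [DecidableEq n] {𝕜 : Type*}
    [RCLike 𝕜] {A B : Matrix n n 𝕜} (hB : B.PosSemidef) (hA : A.PosSemidef) (h : B ^ 2 = A) :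
    B = hA.sqrt := by
  rw [sqrt_eq_cfc_real]
  exact (CFC.sqrt_unique (by rw [← h, pow_two]) hB.nonneg).symm

end Matrix.PosSemidef

/-- CGU state sets with commuting GU generators: if the groups
`G = {U_1,...,U_l}` and `Q = {V_1,...,V_r}` of unitary matrices commute up to a phase,
`U_i V_k = e^{jθ(i,k)} V_k U_i`, and `W = ∑_{i,k} U_i V_k φ φ* V_k* U_i*`, then `W`
commutes with `U_p V_t` for all `p, t`; consequently, if `W` is positive definite, the
LSM factors satisfy `μ_{ik} = W^{-1/2} U_i V_k φ = U_i V_k μ̄` where `μ̄ = W^{-1/2} φ`,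
i.e. they are generated from the single generator `μ̄`. -/
theorem cgu_commuting_gu_generators (n l r c : ℕ) [NeZero l] [NeZero r]
    (U : Fin l → Matrix (Fin n) (Fin n) ℂ)
    (hUunit : ∀ i, U i ∈ Matrix.unitaryGroup (Fin n) ℂ)
    (hUinj : Function.Injective U)
    (hUone : U 0 = 1)
    (hUmul : ∀ i j, ∃ t, U i * U j = U t)
    (hUinv : ∀ i, ∃ j, (U i)ᴴ = U j)
    (V : Fin r → Matrix (Fin n) (Fin n) ℂ)
    (hVunit : ∀ k, V k ∈ Matrix.unitaryGroup (Fin n) ℂ)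
    (hVinj : Function.Injective V)
    (hVone : V 0 = 1)
    (hVmul : ∀ k t, ∃ s, V k * V t = V s)
    (hVinv : ∀ k, ∃ t, (V k)ᴴ = V t)
    (hcomm : ∀ i k, ∃ θ : ℝ, U i * V k = Complex.exp (θ * Complex.I) • (V k * U i))
    (φ : Matrix (Fin n) (Fin c) ℂ)
    (W : Matrix (Fin n) (Fin n) ℂ)
    (hWdef : W = ∑ i, ∑ k, (U i * V k) * (φ * φᴴ) * (U i * V k)ᴴ) :
    (∀ p t, W * (U p * V t) = (U p * V t) * W) ∧
    (∀ (hW : W.PosDef) (i : Fin l) (k : Fin r),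
      (hW.posSemidef.sqrt)⁻¹ * (U i * V k * φ) =
        U i * V k * ((hW.posSemidef.sqrt)⁻¹ * φ)) := by
  set X : Matrix (Fin n) (Fin n) ℂ := φ * φᴴ with hX
  -- main conjugation invariance
  have key : ∀ p t, (U p * V t) * W * (U p * V t)ᴴ = W := by
    intro p t
    have hσ : ∀ i, ∃ m, U p * U i = U m := fun i => hUmul p i
    have hτ : ∀ k, ∃ s, V t * V k = V s := fun k => hVmul t k
    choose σ hσ using hσ
    choose τ hτ using hτ
    have hσbij : Function.Bijective σ := by
      refine Finite.injective_iff_bijective.mp ?_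
      intro a b hab
      apply hUinj
      have h : U p * U a = U p * U b := by rw [hσ, hσ, hab]
      exact (Unitary.toUnits ⟨U p, hUunit p⟩).isUnit.mul_left_cancel h
    have hτbij : Function.Bijective τ := by
      refine Finite.injective_iff_bijective.mp ?_
      intro a b hab
      apply hVinj
      have h : V t * V a = V t * V b := by rw [hτ, hτ, hab]
      exact (Unitary.toUnits ⟨V t, hVunit t⟩).isUnit.mul_left_cancel h
    have term : ∀ i k,
        (U p * V t) * ((U i * V k) * X * (U i * V k)ᴴ) * (U p * V t)ᴴ
          = (U (σ i) * V (τ k)) * X * (U (σ i) * V (τ k))ᴴ := by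
      intro i k
      obtain ⟨θ, hθ⟩ := hcomm i t
      set e : ℂ := Complex.exp (θ * Complex.I) with he
      have hene : e ≠ 0 := Complex.exp_ne_zero _
      have hVU : V t * U i = e⁻¹ • (U i * V t) := by
        rw [hθ, smul_smul, inv_mul_cancel₀ hene, one_smul]
      have hA : (U p * V t) * (U i * V k) = e⁻¹ • (U (σ i) * V (τ k)) := by
        calc (U p * V t) * (U i * V k) = U p * ((V t * U i) * V k) := by
              simp only [Matrix.mul_assoc]
          _ = U p * ((e⁻¹ • (U i * V t)) * V k) := by rw [hVU]
          _ = e⁻¹ • ((U p * U i) * (V t * V k)) := by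
              simp only [Matrix.mul_smul, Matrix.smul_mul, Matrix.mul_assoc]
          _ = e⁻¹ • (U (σ i) * V (τ k)) := by rw [hσ, hτ]
      have hce : (starRingEnd ℂ) e = e⁻¹ := by
        rw [he, ← Complex.exp_conj, ← Complex.exp_neg]
        congr 1
        simp only [_root_.map_mul, Complex.conj_I, Complex.conj_ofReal]
        ring
      have hconj : e⁻¹ * star e⁻¹ = 1 := by
        rw [star_inv₀]
        rw [show (star e : ℂ) = (starRingEnd ℂ) e from rfl, hce, inv_inv,
          inv_mul_cancel₀ hene]
      calc (U p * V t) * ((U i * V k) * X * (U i * V k)ᴴ) * (U p * V t)ᴴ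
          = ((U p * V t) * (U i * V k)) * X * ((U p * V t) * (U i * V k))ᴴ := by
            simp only [conjTranspose_mul, Matrix.mul_assoc]
        _ = (e⁻¹ • (U (σ i) * V (τ k))) * X * (e⁻¹ • (U (σ i) * V (τ k)))ᴴ := by
            rw [hA]
        _ = (e⁻¹ * star e⁻¹) • ((U (σ i) * V (τ k)) * X * (U (σ i) * V (τ k))ᴴ) := by
            rw [conjTranspose_smul]
            simp only [Matrix.smul_mul, Matrix.mul_smul, smul_smul]
            rw [mul_comm]
        _ = (U (σ i) * V (τ k)) * X * (U (σ i) * V (τ k))ᴴ := by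
            rw [hconj, one_smul]
    rw [hWdef]
    simp only [Finset.mul_sum, Finset.sum_mul]
    calc ∑ i, ∑ k, (U p * V t) * ((U i * V k) * X * (U i * V k)ᴴ) * (U p * V t)ᴴ
        = ∑ i, ∑ k, (U (σ i) * V (τ k)) * X * (U (σ i) * V (τ k))ᴴ := by
          exact Finset.sum_congr rfl fun i _ => Finset.sum_congr rfl fun k _ => term i k
      _ = ∑ i, ∑ k, (U i * V k) * X * (U i * V k)ᴴ := by
          refine Fintype.sum_bijective σ hσbij _ _ fun i => ?_
          exact Fintype.sum_bijective τ hτbij _ _ fun k => rfl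
  have hAunit : ∀ p t, (U p * V t) ∈ Matrix.unitaryGroup (Fin n) ℂ :=
    fun p t => mul_mem (hUunit p) (hVunit t)
  have comm1 : ∀ p t, W * (U p * V t) = (U p * V t) * W := by
    intro p t
    have h1 : (U p * V t)ᴴ * (U p * V t) = 1 := (hAunit p t).1
    have h2 : (U p * V t * W * (U p * V t)ᴴ) * (U p * V t) = W * (U p * V t) := by
      rw [key p t]
    rw [Matrix.mul_assoc (U p * V t * W), h1, Matrix.mul_one] at h2
    exact h2.symm
  refine ⟨comm1, ?_⟩
  intro hW i k
  set A := U i * V k with hAdef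
  set S := hW.posSemidef.sqrt with hS
  have hSps : S.PosSemidef := hW.posSemidef.posSemidef_sqrt
  have hSsq : S * S = W := hW.posSemidef.sqrt_mul_self
  have hAu : Aᴴ * A = 1 := (hAunit i k).1
  have hT : (A * S * Aᴴ).PosSemidef := hSps.mul_mul_conjTranspose_same A
  have hTsq : (A * S * Aᴴ) ^ 2 = W := by
    have h3 : (A * S * Aᴴ) * (A * S * Aᴴ) = A * (S * ((Aᴴ * A) * (S * Aᴴ))) := by
      simp only [Matrix.mul_assoc]
    rw [pow_two, h3, hAu, Matrix.one_mul]
    have h4 : A * (S * (S * Aᴴ)) = A * W * Aᴴ := by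
      rw [← hSsq]; simp only [Matrix.mul_assoc]
    rw [h4, key i k]
  have hTeq : A * S * Aᴴ = S := hT.eq_sqrt_of_sq_eq hW.posSemidef hTsq
  have hcommS : A * S = S * A := by
    have h5 := congrArg (· * A) hTeq
    simp only [Matrix.mul_assoc] at h5
    rw [hAu, Matrix.mul_one] at h5
    exact h5
  have hdet : IsUnit S.det := by
    have h6 : S.det * S.det = W.det := by rw [← det_mul, hSsq]
    have hWdet : IsUnit W.det := hW.det_pos.ne'.isUnit
    exact isUnit_of_mul_isUnit_left (h6 ▸ hWdet)
  have hSinv : S * S⁻¹ = 1 := mul_nonsing_inv S hdet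
  have hSinv' : S⁻¹ * S = 1 := nonsing_inv_mul S hdet
  have hcommSinv : S⁻¹ * A = A * S⁻¹ := by
    have h7 := congrArg (fun M => S⁻¹ * M * S⁻¹) hcommS
    simp only [Matrix.mul_assoc] at h7
    -- h7 : S⁻¹ * (A * (S * S⁻¹)) = S⁻¹ * (S * (A * S⁻¹))
    rw [hSinv, Matrix.mul_one, ← Matrix.mul_assoc S⁻¹ S, hSinv', Matrix.one_mul] at h7
    exact h7
  calc S⁻¹ * (A * φ) = (S⁻¹ * A) * φ := by rw [← Matrix.mul_assoc]
    _ = (A * S⁻¹) * φ := by rw [hcommSinv]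
    _ = A * (S⁻¹ * φ) := by rw [Matrix.mul_assoc]
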